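/- arXiv:2012.07083 — 2 statements merged into one kernel-verified Lean document; each statement's English description precedes it below -/
import Mathlib

section
/- Let f : [0,1] → ℝ be defined by f(x) = 9/10 - (2/5)x. Then f is strictly positive on [0,1], and for all x ∈ [0,1], ∑_{j ∈ {1,2,3,5}} f(1/(j+x)) · (j+x)^{-2t} ≥ 1.0004 · f(x), where t = 3 - √5. -/
/-!
Since the test function is affine, it suffices to treat the intervals `[a, b]` of a partition of
`[0, 1]` one at a time. On such an interval each term `f (1 / (j + x)) * (j + x) ^ (-2t)` is
bounded below by a product of two affine functions of `x` with slopes of opposite signs: the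
chord of `f (1 / (j + x))` (concave, since `1 / y` is convex) and the tangent line at `a` of the
convex function `(j + x) ^ (-2t)`, with its value at `a` replaced by a certified rational lower
bound and its slope by the slope for the rational exponent `466 / 305 ≥ 2t`. Such a product is
concave, hence lies above its own chord, so on `[a, b]` the transfer sum dominates an affine
function of `x`, and comparing it with `1.0004 f` reduces to finitely many rational inequalities
at the endpoints. Fourteen intervals suffice.
-/

open Real Set

theorem one_sub_mul_sub_one_le_rpow_neg {v s : ℝ} (hv : 0 < v) (hs : 0 ≤ s) :
    1 - s * (v - 1) ≤ v ^ (-s) := by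
  rw [rpow_def_of_pos hv]
  calc 1 - s * (v - 1) ≤ log v * -s + 1 := by
        nlinarith [mul_le_mul_of_nonneg_left (log_le_sub_one_of_pos hv) hs]
    _ ≤ exp (log v * -s) := add_one_le_exp _

theorem le_rpow_neg_div_of_pow_mul_pow_le_one {A u : ℝ} {m n : ℕ} (hA : 0 ≤ A) (hu : 0 < u)
    (hn : n ≠ 0) (h : A ^ n * u ^ m ≤ 1) : A ≤ u ^ (-(m / n : ℝ)) := by
  have hn' : (0 : ℝ) < n := by positivity
  rw [← neg_div, div_eq_mul_inv, rpow_mul hu.le, le_rpow_inv_iff_of_pos hA (by positivity) hn',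
    rpow_natCast, rpow_neg hu.le, rpow_natCast, ← one_div, le_div_iff₀ (by positivity)]
  exact h

theorem mul_one_sub_le_rpow_neg {A p y s κ : ℝ} (hp : 0 < p) (hpy : p ≤ y) (hs : 0 ≤ s)
    (hsκ : s ≤ κ) (hA : A ≤ p ^ (-s)) (hT : 0 ≤ 1 - κ * (y - p) / p) :
    A * (1 - κ * (y - p) / p) ≤ y ^ (-s) := by
  have hyp : 0 < y / p := div_pos (hp.trans_le hpy) hp
  calc A * (1 - κ * (y - p) / p) ≤ p ^ (-s) * (1 - κ * (y - p) / p) :=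
        mul_le_mul_of_nonneg_right hA hT
    _ ≤ p ^ (-s) * (1 - s * (y / p - 1)) := by
        gcongr
        rw [div_sub_one hp.ne', mul_div_assoc]
        gcongr
    _ ≤ p ^ (-s) * (y / p) ^ (-s) :=
        mul_le_mul_of_nonneg_left (one_sub_mul_sub_one_le_rpow_neg hyp hs) (by positivity)
    _ = y ^ (-s) := by rw [← mul_rpow hp.le hyp.le, mul_div_cancel₀ _ hp.ne']

theorem one_div_le_chord {p q y : ℝ} (hp : 0 < p) (hpy : p ≤ y) (hyq : y ≤ q) :
    1 / y ≤ 1 / p - (y - p) / (p * q) := by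
  have hy : 0 < y := hp.trans_le hpy
  have hq : 0 < q := hy.trans_le hyq
  have h : 1 / p - (y - p) / (p * q) - 1 / y = (y - p) * (q - y) / (p * q * y) := by
    field_simp
    ring
  have : 0 ≤ (y - p) * (q - y) / (p * q * y) :=
    div_nonneg (mul_nonneg (sub_nonneg.2 hpy) (sub_nonneg.2 hyq)) (by positivity)
  linarith

theorem chord_le_affine_mul_affine {F A r k z h : ℝ} (hr : 0 ≤ r) (hk : 0 ≤ k) (hz : 0 ≤ z)
    (hzh : z ≤ h) :
    (h - z) * (F * A) + z * ((F + r * h) * (A - k * h)) ≤ h * ((F + r * z) * (A - k * z)) := by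
  have h₀ : 0 ≤ r * k * z * (h - z) * h :=
    mul_nonneg (mul_nonneg (by positivity) (sub_nonneg.2 hzh)) (hz.trans hzh)
  have : h * ((F + r * z) * (A - k * z)) =
      (h - z) * (F * A) + z * ((F + r * h) * (A - k * h)) + r * k * z * (h - z) * h := by ring
  linarith

theorem chord_le_transfer_term {α β s κ A p y q : ℝ} (hβ : 0 ≤ β) (hs : 0 ≤ s) (hsκ : s ≤ κ)
    (hp : 0 < p) (hpy : p ≤ y) (hyq : y ≤ q) (hA₀ : 0 ≤ A) (hA : A ≤ p ^ (-s))
    (hT : 0 ≤ 1 - κ * (q - p) / p) (hf : 0 ≤ α - β * (1 / p)) :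
    (q - y) * ((α - β * (1 / p)) * A)
        + (y - p) * ((α - β * (1 / q)) * (A * (1 - κ * (q - p) / p)))
      ≤ (q - p) * ((α - β * (1 / y)) * y ^ (-s)) := by
  have hκ : 0 ≤ κ := hs.trans hsκ
  have hq : 0 < q := by linarith
  have hTy₀ : 0 ≤ 1 - κ * (y - p) / p := hT.trans (by gcongr)
  have hTy := mul_one_sub_le_rpow_neg hp hpy hs hsκ hA hTy₀
  have hfy : α - β * (1 / p) + β / (p * q) * (y - p) ≤ α - β * (1 / y) := by
    have := mul_le_mul_of_nonneg_left (one_div_le_chord hp hpy hyq) hβ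
    calc α - β * (1 / p) + β / (p * q) * (y - p)
        = α - β * (1 / p - (y - p) / (p * q)) := by ring
      _ ≤ α - β * (1 / y) := by linarith
  have hfq : α - β * (1 / q) = α - β * (1 / p) + β / (p * q) * (q - p) := by
    field_simp
    ring
  have hfy₀ : 0 ≤ α - β * (1 / y) :=
    hf.trans (by linarith [mul_nonneg (by positivity : 0 ≤ β / (p * q)) (sub_nonneg.2 hpy)])
  calc (q - y) * ((α - β * (1 / p)) * A)
        + (y - p) * ((α - β * (1 / q)) * (A * (1 - κ * (q - p) / p)))
      = (q - p - (y - p)) * ((α - β * (1 / p)) * A) + (y - p) *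
          ((α - β * (1 / p) + β / (p * q) * (q - p)) * (A - A * κ / p * (q - p))) := by
        rw [hfq]
        ring
    _ ≤ (q - p) * ((α - β * (1 / p) + β / (p * q) * (y - p)) * (A - A * κ / p * (y - p))) :=
        chord_le_affine_mul_affine (by positivity) (by positivity) (by linarith) (by linarith)
    _ = (q - p) *
          ((α - β * (1 / p) + β / (p * q) * (y - p)) * (A * (1 - κ * (y - p) / p))) := by
        ring
    _ ≤ (q - p) * ((α - β * (1 / y)) * y ^ (-s)) :=
        mul_le_mul_of_nonneg_left (mul_le_mul hfy hTy (mul_nonneg hA₀ hTy₀) hfy₀) (by linarith)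

theorem transfer_ge_on_Icc (D : Finset ℕ) (A : ℕ → ℝ) {α β s κ c a b : ℝ} (hβ : 0 ≤ β)
    (hs : 0 ≤ s) (hsκ : s ≤ κ) (hab : a < b)
    (hA : ∀ j ∈ D, 0 < (j : ℝ) + a ∧ 0 ≤ A j ∧ A j ≤ ((j : ℝ) + a) ^ (-s) ∧
      0 ≤ 1 - κ * (b - a) / (j + a) ∧ 0 ≤ α - β * (1 / (j + a)))
    (ha : c * (α - β * a) ≤ ∑ j ∈ D, (α - β * (1 / ((j : ℝ) + a))) * A j)
    (hb : c * (α - β * b) ≤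
      ∑ j ∈ D, (α - β * (1 / ((j : ℝ) + b))) * (A j * (1 - κ * (b - a) / (j + a)))) :
    Icc a b ⊆ {x | c * (α - β * x) ≤
      ∑ j ∈ D, (α - β * (1 / ((j : ℝ) + x))) * (j + x) ^ (-s)} := by
  rintro x ⟨hax, hxb⟩
  refine le_of_mul_le_mul_left ?_ (sub_pos.2 hab)
  calc (b - a) * (c * (α - β * x))
      = (b - x) * (c * (α - β * a)) + (x - a) * (c * (α - β * b)) := by ring
    _ ≤ (b - x) * ∑ j ∈ D, (α - β * (1 / ((j : ℝ) + a))) * A j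
        + (x - a) * ∑ j ∈ D,
          (α - β * (1 / ((j : ℝ) + b))) * (A j * (1 - κ * (b - a) / (j + a))) := by
      gcongr
    _ ≤ ∑ j ∈ D, (b - a) * ((α - β * (1 / ((j : ℝ) + x))) * (j + x) ^ (-s)) := by
      rw [Finset.mul_sum, Finset.mul_sum, ← Finset.sum_add_distrib]
      refine Finset.sum_le_sum fun j hj => ?_
      obtain ⟨hp, hA₀, hAj, hT, hf⟩ := hA j hj
      have := chord_le_transfer_term hβ hs hsκ hp (by linarith : (j : ℝ) + a ≤ j + x)
        (by linarith : (j : ℝ) + x ≤ j + b) hA₀ hAj (by rwa [add_sub_add_left_eq_sub]) hf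
      simpa only [add_sub_add_left_eq_sub] using this
    _ = (b - a) * ∑ j ∈ D, (α - β * (1 / ((j : ℝ) + x))) * (j + x) ^ (-s) := by
      rw [Finset.mul_sum]

/-- `682 ^ 2 + 1 = 5 * 305 ^ 2`, so `682 / 305` is an excellent lower bound for `√5`. -/
theorem two_mul_three_sub_sqrt_five_mem_Icc : 2 * (3 - √5) ∈ Icc 0 (466 / 305) := by
  have h₁ : (682 / 305 : ℝ) ≤ √5 := Real.le_sqrt_of_sq_le (by norm_num)
  have h₂ : √5 ≤ 3 := Real.sqrt_le_iff.2 ⟨by norm_num, by norm_num⟩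
  constructor <;> linarith

def transferTestSet : Set ℝ :=
  {x | (1.0004 : ℝ) * (9 / 10 - 2 / 5 * x) ≤ ∑ j ∈ ({1, 2, 3, 5} : Finset ℕ),
    (9 / 10 - 2 / 5 * (1 / ((j : ℝ) + x))) * ((j : ℝ) + x) ^ (-(2 * (3 - √5)))}

/-- `A j` is a lower bound for `(j + a) ^ (-(466 / 305))`, certified by
`A j ^ 305 * (j + a) ^ 466 ≤ 1`; the exponents are split as `5 * 61` and `2 * 233` because
`norm_num` does not evaluate powers with exponents above 256. -/
def IsWeightCertificate (a b : ℝ) (A : ℕ → ℝ) : Prop :=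
  0 ≤ a ∧ a < b ∧
  (∀ j ∈ ({1, 2, 3, 5} : Finset ℕ), 0 ≤ A j ∧ (A j ^ 5) ^ 61 * (((j : ℝ) + a) ^ 2) ^ 233 ≤ 1 ∧
    0 ≤ 1 - 466 / 305 * (b - a) / (j + a)) ∧
  (1.0004 : ℝ) * (9 / 10 - 2 / 5 * a) ≤
    ∑ j ∈ ({1, 2, 3, 5} : Finset ℕ), (9 / 10 - 2 / 5 * (1 / ((j : ℝ) + a))) * A j ∧
  (1.0004 : ℝ) * (9 / 10 - 2 / 5 * b) ≤ ∑ j ∈ ({1, 2, 3, 5} : Finset ℕ),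
    (9 / 10 - 2 / 5 * (1 / ((j : ℝ) + b))) * (A j * (1 - 466 / 305 * (b - a) / (j + a)))

theorem IsWeightCertificate.Icc_subset {a b : ℝ} {A : ℕ → ℝ} (h : IsWeightCertificate a b A) :
    Icc a b ⊆ transferTestSet := by
  obtain ⟨ha, hab, hA, hfa, hfb⟩ := h
  obtain ⟨hs, hsκ⟩ := two_mul_three_sub_sqrt_five_mem_Icc
  refine transfer_ge_on_Icc _ A (by norm_num) hs hsκ hab (fun j hj => ?_) hfa hfb
  obtain ⟨hA₀, hcert, hT⟩ := hA j hj
  have hj : (1 : ℝ) ≤ j := by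
    simp only [Finset.mem_insert, Finset.mem_singleton] at hj
    exact_mod_cast (by omega : 1 ≤ j)
  have hu : 1 ≤ (j : ℝ) + a := by linarith
  refine ⟨by linarith, hA₀, ?_, hT, ?_⟩
  · rw [← pow_mul, ← pow_mul] at hcert
    calc A j ≤ ((j : ℝ) + a) ^ (-((2 * 233 : ℕ) / (5 * 61 : ℕ) : ℝ)) :=
          le_rpow_neg_div_of_pow_mul_pow_le_one hA₀ (by linarith) (by norm_num) hcert
      _ ≤ ((j : ℝ) + a) ^ (-(2 * (3 - √5))) := by
          gcongr
          push_cast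
          linarith
  · have : 1 / ((j : ℝ) + a) ≤ 1 := by rw [div_le_one (by linarith)]; exact hu
    linarith

theorem IsWeightCertificate.Icc_subset_trans {a c : ℝ} (b : ℝ) (A : ℕ → ℝ)
    (hbc : Icc b c ⊆ transferTestSet) (h : IsWeightCertificate a b A) :
    Icc a c ⊆ transferTestSet :=
  Icc_subset_Icc_union_Icc.trans (union_subset h.Icc_subset hbc)

-- The weights are `(j + a) ^ (-(466 / 305))` rounded down to seven decimals.
theorem Icc_zero_one_subset_transferTestSet : Icc (0 : ℝ) 1 ⊆ transferTestSet := by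
  refine IsWeightCertificate.Icc_subset_trans 0.16
    (fun | 1 => 1 | 2 => 0.3467892 | 3 => 0.1866471 | _ => 0.0855195) ?_ ?_
  refine IsWeightCertificate.Icc_subset_trans 0.285
    (fun | 1 => 0.797107 | 2 => 0.3083177 | 3 => 0.1724025 | _ => 0.0815013) ?_ ?_
  refine IsWeightCertificate.Icc_subset_trans 0.374
    (fun | 1 => 0.6817266 | 2 => 0.2829234 | 3 => 0.1624806 | _ => 0.0785745) ?_ ?_
  refine IsWeightCertificate.Icc_subset_trans 0.432
    (fun | 1 => 0.6154239 | 2 => 0.2668791 | 3 => 0.155978 | _ => 0.076595) ?_ ?_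
  refine IsWeightCertificate.Icc_subset_trans 0.469
    (fun | 1 => 0.5777494 | 2 => 0.2572161 | 3 => 0.1519686 | _ => 0.075349) ?_ ?_
  refine IsWeightCertificate.Icc_subset_trans 0.491
    (fun | 1 => 0.5556644 | 2 => 0.2513502 | 3 => 0.1494991 | _ => 0.0745716) ?_ ?_
  refine IsWeightCertificate.Icc_subset_trans 0.505
    (fun | 1 => 0.5431864 | 2 => 0.2479664 | 3 => 0.148062 | _ => 0.0741155) ?_ ?_
  refine IsWeightCertificate.Icc_subset_trans 0.513
    (fun | 1 => 0.5354852 | 2 => 0.2458521 | 3 => 0.1471594 | _ => 0.0738278) ?_ ?_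
  refine IsWeightCertificate.Icc_subset_trans 0.519
    (fun | 1 => 0.5311653 | 2 => 0.2446574 | 3 => 0.1466477 | _ => 0.0736641) ?_ ?_
  refine IsWeightCertificate.Icc_subset_trans 0.524
    (fun | 1 => 0.527963 | 2 => 0.2437675 | 3 => 0.1462658 | _ => 0.0735418) ?_ ?_
  refine IsWeightCertificate.Icc_subset_trans 0.532
    (fun | 1 => 0.5253188 | 2 => 0.2430301 | 3 => 0.1459489 | _ => 0.0734401) ?_ ?_
  refine IsWeightCertificate.Icc_subset_trans 0.556
    (fun | 1 => 0.5211333 | 2 => 0.2418579 | 3 => 0.1454441 | _ => 0.0732779) ?_ ?_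
  refine IsWeightCertificate.Icc_subset_trans 0.651
    (fun | 1 => 0.5089024 | 2 => 0.2383968 | 3 => 0.143947 | _ => 0.0727949) ?_ ?_
  refine IsWeightCertificate.Icc_subset
    (A := fun | 1 => 0.464848 | 2 => 0.2254682 | 3 => 0.1382637 | _ => 0.0709334) ?_
  all_goals norm_num [IsWeightCertificate]

theorem stmt2 :
    let t : ℝ := 3 - Real.sqrt 5
    let f : ℝ → ℝ := fun x => 9/10 - (2/5) * x
    (∀ x ∈ Set.Icc (0:ℝ) 1, 0 < f x) ∧
    (∀ x ∈ Set.Icc (0:ℝ) 1,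
      (1.0004 : ℝ) * f x ≤
        ∑ j ∈ ({1, 2, 3, 5} : Finset ℕ), f (1 / ((j:ℝ) + x)) * ((j:ℝ) + x) ^ (-(2 * t))) := by
  intro t f
  exact ⟨fun x hx => by simp only [f]; linarith [hx.2],
    fun x hx => Icc_zero_one_subset_transferTestSet hx⟩
end

section
/- Let t = 5/6 and f(x) = 1 - x/2 on [0,1]. Define E(x) = ∑_{n=2}^∞ f(1/(x+8n-7)) · (x+8n-7)^{-2t}. Then for all x ∈ [0,1], E(x) ≤ (3/16)·(1 - 1/(5·9^{5/3})). Moreover, sup_{x ∈ [0,1]} [f(1/(x+1))·(x+1)^{-5/3} + E(x)] / f(x) < 1. -/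
/-!
Each term of `E x` is at most `(8n + 9) ^ (-5/3)`. The tangent-line inequality for the convex
function `u ↦ u ^ (-2/3)` makes these bounds telescope, so `E x ≤ 9 ^ (-5/3) + (3/16) 9 ^ (-2/3)`,
which is below `3/40` because `9 ^ (2/3) ≥ 4`; this is far below the first bound. For the ratio,
bounding `(x + 1) ^ (-5/3)` by `(x + 1)⁻¹` leaves a cubic inequality on `[0, 1]`.
-/

open Real Finset

/-- `(y / z) ^ (-p) = exp (p log (z / y)) ≥ 1 + p log (z / y) ≥ 1 + p (1 - y / z)`. -/
theorem rpow_neg_tangent_le {y z p : ℝ} (hy : 0 < y) (hz : 0 < z) (hp : 0 ≤ p) :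
    p * (z - y) * z ^ (-(p + 1)) ≤ y ^ (-p) - z ^ (-p) := by
  have hlog : 1 - y / z ≤ log z - log y := by
    rw [← log_div hz.ne' hy.ne']
    simpa only [inv_div] using one_sub_inv_le_log_of_pos (div_pos hz hy)
  have hy' : y ^ (-p) = z ^ (-p) * exp (p * (log z - log y)) := by
    rw [rpow_def_of_pos hy, rpow_def_of_pos hz, ← exp_add]
    ring_nf
  have hz' : z ^ (-(p + 1)) = z ^ (-p) / z := by
    rw [neg_add, rpow_add hz, rpow_neg_one, div_eq_mul_inv]
  calc p * (z - y) * z ^ (-(p + 1)) = z ^ (-p) * (p * (1 - y / z)) := by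
        rw [hz']; field_simp
    _ ≤ z ^ (-p) * (exp (p * (log z - log y)) - 1) := by
        gcongr
        linarith [add_one_le_exp (p * (log z - log y)), mul_le_mul_of_nonneg_left hlog hp]
    _ = y ^ (-p) - z ^ (-p) := by rw [hy']; ring

theorem sum_range_rpow_neg_succ_le {c d p : ℝ} (hc : 0 < c) (hd : 0 < d) (hp : 0 ≤ p) (N : ℕ) :
    p * d * ∑ n ∈ range N, (c + d * (n + 1)) ^ (-(p + 1)) ≤ c ^ (-p) - (c + d * N) ^ (-p) := by
  induction N with
  | zero => simp
  | succ N ih =>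
    have step := rpow_neg_tangent_le (y := c + d * N) (z := c + d * (N + 1)) (p := p)
      (by positivity) (by positivity) hp
    rw [sum_range_succ, mul_add]
    push_cast
    linarith

theorem sum_range_rpow_neg_le {c d p : ℝ} (hc : 0 < c) (hd : 0 < d) (hp : 0 < p) (N : ℕ) :
    ∑ n ∈ range N, (c + d * n) ^ (-(p + 1)) ≤ c ^ (-(p + 1)) + c ^ (-p) / (p * d) := by
  have htel := sum_range_rpow_neg_succ_le hc hd hp.le N
  have htail : ∑ n ∈ range N, (c + d * (n + 1)) ^ (-(p + 1)) ≤ c ^ (-p) / (p * d) := by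
    rw [le_div_iff₀ (by positivity), mul_comm]
    linarith [rpow_nonneg (by positivity : 0 ≤ c + d * N) (-p)]
  calc ∑ n ∈ range N, (c + d * n) ^ (-(p + 1))
      ≤ ∑ n ∈ range (N + 1), (c + d * n) ^ (-(p + 1)) :=
        sum_le_sum_of_subset_of_nonneg (range_subset_range.2 N.le_succ)
          (fun n _ _ => rpow_nonneg (by positivity) _)
    _ = c ^ (-(p + 1)) + ∑ n ∈ range N, (c + d * (n + 1)) ^ (-(p + 1)) := by
        rw [sum_range_succ', add_comm]; push_cast; simp
    _ ≤ c ^ (-(p + 1)) + c ^ (-p) / (p * d) := by linarith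

theorem tsum_le_of_le_rpow_neg {g : ℕ → ℝ} {c d p : ℝ} (hc : 0 < c) (hd : 0 < d) (hp : 0 < p)
    (hg₀ : ∀ n, 0 ≤ g n) (hg : ∀ n, g n ≤ (c + d * n) ^ (-(p + 1))) :
    ∑' n, g n ≤ c ^ (-(p + 1)) + c ^ (-p) / (p * d) :=
  tsum_le_of_sum_range_le hg₀ fun N =>
    (sum_le_sum fun n _ => hg n).trans (sum_range_rpow_neg_le hc hd hp N)

theorem four_le_nine_rpow : (4 : ℝ) ≤ 9 ^ (2 / 3 : ℝ) := by
  have hcube : ((9 : ℝ) ^ (2 / 3 : ℝ)) ^ 3 = 81 := by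
    rw [← rpow_natCast, ← rpow_mul (by norm_num)]; norm_num
  exact le_of_pow_le_pow_left₀ three_ne_zero (by positivity) (by rw [hcube]; norm_num)

theorem tsum_tail_le {x : ℝ} (hx : 0 ≤ x) :
    ∑' n : ℕ, (1 - 1 / (x + 8 * ((n : ℝ) + 2) - 7) / 2) *
      (x + 8 * ((n : ℝ) + 2) - 7) ^ (-(5 / 3 : ℝ)) ≤ 3 / 40 := by
  have hexp : -(2 / 3 + 1 : ℝ) = -(5 / 3) := by norm_num
  have hterm (n : ℕ) : 9 + 8 * (n : ℝ) ≤ x + 8 * ((n : ℝ) + 2) - 7 := by linarith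
  have hpos (n : ℕ) : (0 : ℝ) < 9 + 8 * n := by positivity
  have hweight (n : ℕ) : 0 ≤ 1 / (x + 8 * ((n : ℝ) + 2) - 7) ∧
      1 / (x + 8 * ((n : ℝ) + 2) - 7) ≤ 1 :=
    ⟨one_div_nonneg.2 ((hpos n).le.trans (hterm n)),
      div_le_one_of_le₀ (by linarith [hterm n, n.cast_nonneg (α := ℝ)]) (by linarith [hterm n])⟩
  have hsum := tsum_le_of_le_rpow_neg (c := 9) (d := 8) (p := 2 / 3) (by norm_num) (by norm_num)
    (by norm_num) (g := fun n : ℕ => (1 - 1 / (x + 8 * ((n : ℝ) + 2) - 7) / 2) *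
      (x + 8 * ((n : ℝ) + 2) - 7) ^ (-(5 / 3 : ℝ)))
    (fun n => mul_nonneg (by linarith [hweight n]) (rpow_nonneg (by linarith [hterm n]) _))
    (fun n => hexp ▸ (mul_le_of_le_one_left (rpow_nonneg ((hpos n).le.trans (hterm n)) _)
      (by linarith [hweight n])).trans (rpow_le_rpow_of_nonpos (hpos n) (hterm n) (by norm_num)))
  have hnine : (9 : ℝ) ^ (-(2 / 3 : ℝ)) ≤ 1 / 4 := by
    rw [rpow_neg (by norm_num), inv_eq_one_div]
    exact one_div_le_one_div_of_le (by norm_num) four_le_nine_rpow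
  have hsplit : (9 : ℝ) ^ (-(2 / 3 + 1 : ℝ)) = 9 ^ (-(2 / 3 : ℝ)) / 9 := by
    rw [neg_add, rpow_add (by norm_num), rpow_neg_one]; ring
  refine hsum.trans ?_
  rw [hsplit]
  ring_nf
  linarith

theorem head_add_tail_le {x : ℝ} (hx : x ∈ Set.Icc (0 : ℝ) 1) :
    (1 - 1 / (x + 1) / 2) * (x + 1)⁻¹ + 3 / 40 ≤ 19 / 20 * (1 - x / 2) := by
  obtain ⟨hx₀, hx₁⟩ := hx
  have hcubic : 0 ≤ 15 + 11 * x - 3 * x ^ 2 - 19 * x ^ 3 := by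
    nlinarith [mul_nonneg hx₀ (sub_nonneg.2 hx₁),
      mul_nonneg (mul_nonneg hx₀ hx₀) (sub_nonneg.2 hx₁)]
  rw [← sub_nonneg]
  have hid : 19 / 20 * (1 - x / 2) - ((1 - 1 / (x + 1) / 2) * (x + 1)⁻¹ + 3 / 40) =
      (15 + 11 * x - 3 * x ^ 2 - 19 * x ^ 3) / (40 * (x + 1) ^ 2) := by
    field_simp
    ring
  rw [hid]
  positivity

theorem stmt5 :
    let f : ℝ → ℝ := fun y => 1 - y / 2
    let E : ℝ → ℝ := fun x =>
      ∑' n : ℕ, f (1 / (x + 8 * ((n:ℝ) + 2) - 7)) * (x + 8 * ((n:ℝ) + 2) - 7) ^ (-(5/3 : ℝ))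
    (∀ x ∈ Set.Icc (0:ℝ) 1,
      E x ≤ (3/16) * (1 - 1 / (5 * (9:ℝ) ^ ((5/3 : ℝ))))) ∧
    (∃ c : ℝ, c < 1 ∧ ∀ x ∈ Set.Icc (0:ℝ) 1,
      (f (1 / (x + 1)) * (x + 1) ^ (-(5/3 : ℝ)) + E x) / f x ≤ c) := by
  intro f E
  have hE (x : ℝ) (hx : x ∈ Set.Icc (0 : ℝ) 1) : E x ≤ 3 / 40 := tsum_tail_le hx.1
  refine ⟨fun x hx => (hE x hx).trans ?_, 19 / 20, by norm_num, fun x hx => ?_⟩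
  · have h : 1 / (5 * (9 : ℝ) ^ (5 / 3 : ℝ)) ≤ 1 / 5 := by
      gcongr
      exact le_mul_of_one_le_right (by norm_num) (one_le_rpow (by norm_num) (by norm_num))
    linarith
  · obtain ⟨hx₀, hx₁⟩ := hx
    have hf : 0 < f x := by simp only [f]; linarith
    have hhead : (x + 1) ^ (-(5 / 3 : ℝ)) ≤ (x + 1)⁻¹ := by
      simpa only [rpow_neg_one] using rpow_le_rpow_of_exponent_le
        (by linarith : (1 : ℝ) ≤ x + 1) (by norm_num : -(5 / 3 : ℝ) ≤ -1)
    have hweight : 0 ≤ f (1 / (x + 1)) := by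
      simp only [f]; linarith [div_le_one_of_le₀ (by linarith : (1 : ℝ) ≤ x + 1) (by linarith)]
    rw [div_le_iff₀ hf]
    calc f (1 / (x + 1)) * (x + 1) ^ (-(5 / 3 : ℝ)) + E x
        ≤ f (1 / (x + 1)) * (x + 1)⁻¹ + 3 / 40 := by gcongr; exact hE x ⟨hx₀, hx₁⟩
      _ ≤ 19 / 20 * f x := head_add_tail_le ⟨hx₀, hx₁⟩
end
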